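/- Let a : [0,T] → ℝ be continuous, and for each n let F_i^{(n)} := ∫_{(i−1)Δt_n}^{iΔt_n} a(u)du with Δt_n → 0. Then for each t ∈ [0,T], ∏_{i=1}^{⌊t/Δt_n⌋} (1 + F_i^{(n)})^{-1} → exp(−∫_0^t a(s)ds) as n → ∞. -/

import Mathlib

/-!
Taking logarithms, the product is `exp (-∑ᵢ log (1 + Fᵢ))`. Since `log (1 + x) = x + O(x²)` and
`|Fᵢ| ≤ M Δt`, the logarithms may be replaced by the `Fᵢ` at a cost `O(∑ᵢ Fᵢ²) = O(t M² Δt)`,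
and `∑ᵢ Fᵢ = ∫₀^{⌊t/Δt⌋ Δt} a`, which tends to `∫₀ᵗ a` by continuity of the primitive.
-/

open MeasureTheory intervalIntegral Filter Topology Finset Real

theorem abs_log_one_add_sub_self_le {x : ℝ} (hx : |x| ≤ 1 / 2) :
    |log (1 + x) - x| ≤ 2 * x ^ 2 := by
  obtain ⟨hx₁, -⟩ := abs_le.1 hx
  have hpos : 0 < 1 + x := by linarith
  have hupper : log (1 + x) ≤ x := by linarith [log_le_sub_one_of_pos hpos]
  have hlower : x - x ^ 2 / (1 + x) ≤ log (1 + x) := by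
    convert one_sub_inv_le_log_of_pos hpos using 1
    field_simp
    ring
  have hquad : x ^ 2 / (1 + x) ≤ 2 * x ^ 2 := by
    rw [div_le_iff₀ hpos]
    nlinarith [sq_nonneg x]
  rw [abs_sub_comm, abs_of_nonneg (by linarith)]
  linarith

section ProductLimit

variable {ι κ : Type*} {l : Filter ι} {s : ι → Finset κ} {x : ι → κ → ℝ} {S : ℝ}

theorem tendsto_sum_log_one_add (hsmall : ∀ᶠ n in l, ∀ i ∈ s n, |x n i| ≤ 1 / 2)
    (hsum : Tendsto (fun n => ∑ i ∈ s n, x n i) l (𝓝 S))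
    (hsq : Tendsto (fun n => ∑ i ∈ s n, x n i ^ 2) l (𝓝 0)) :
    Tendsto (fun n => ∑ i ∈ s n, log (1 + x n i)) l (𝓝 S) := by
  have herr : Tendsto (fun n => ∑ i ∈ s n, (log (1 + x n i) - x n i)) l (𝓝 0) := by
    rw [tendsto_zero_iff_abs_tendsto_zero]
    refine squeeze_zero' (Eventually.of_forall fun n => abs_nonneg _) ?_
      (by simpa using hsq.const_mul 2)
    filter_upwards [hsmall] with n hn
    calc |∑ i ∈ s n, (log (1 + x n i) - x n i)|
        ≤ ∑ i ∈ s n, |log (1 + x n i) - x n i| := abs_sum_le_sum_abs _ _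
      _ ≤ ∑ i ∈ s n, 2 * x n i ^ 2 :=
          sum_le_sum fun i hi => abs_log_one_add_sub_self_le (hn i hi)
      _ = 2 * ∑ i ∈ s n, x n i ^ 2 := (mul_sum _ _ _).symm
  simpa [sum_sub_distrib] using hsum.add herr

theorem tendsto_prod_inv_one_add (hsmall : ∀ᶠ n in l, ∀ i ∈ s n, |x n i| ≤ 1 / 2)
    (hsum : Tendsto (fun n => ∑ i ∈ s n, x n i) l (𝓝 S))
    (hsq : Tendsto (fun n => ∑ i ∈ s n, x n i ^ 2) l (𝓝 0)) :
    Tendsto (fun n => ∏ i ∈ s n, (1 + x n i)⁻¹) l (𝓝 (exp (-S))) := by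
  refine ((continuous_exp.tendsto _).comp
    (tendsto_sum_log_one_add hsmall hsum hsq).neg).congr' ?_
  filter_upwards [hsmall] with n hn
  rw [Function.comp_apply, exp_neg, exp_sum, ← prod_inv_distrib]
  refine prod_congr rfl fun i hi => ?_
  rw [exp_log (by linarith [(abs_le.1 (hn i hi)).1])]

end ProductLimit

section Mesh

variable {a : ℝ → ℝ} {t Δ M : ℝ}

theorem natFloor_div_mul_le (ht : 0 ≤ t) (hΔ : 0 < Δ) : ⌊t / Δ⌋₊ * Δ ≤ t :=
  (le_div_iff₀ hΔ).1 (Nat.floor_le (div_nonneg ht hΔ.le))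

theorem sub_lt_natFloor_div_mul (hΔ : 0 < Δ) : t - Δ < ⌊t / Δ⌋₊ * Δ := by
  have := (div_lt_iff₀ hΔ).1 (Nat.lt_floor_add_one (t / Δ))
  linarith

theorem sum_integral_mesh {N : ℕ} (hΔ : 0 ≤ Δ) (ha : IntervalIntegrable a volume 0 (N * Δ)) :
    ∑ i ∈ range N, ∫ u in i * Δ..(i + 1) * Δ, a u = ∫ u in 0..N * Δ, a u := by
  have hmem : ∀ k ≤ N, (k : ℝ) * Δ ∈ Set.uIcc 0 (N * Δ) := fun k hk => by
    rw [Set.uIcc_of_le (by positivity)]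
    exact ⟨by positivity, mul_le_mul_of_nonneg_right (by exact_mod_cast hk) hΔ⟩
  have := sum_integral_adjacent_intervals (μ := volume) (f := a) (a := fun k : ℕ => k * Δ)
    (n := N) fun k hk => ha.mono_set (Set.uIcc_subset_uIcc (hmem k hk.le) (hmem (k + 1) hk))
  simpa using this

theorem abs_integral_mesh_le (hΔ : 0 < Δ) (hM : ∀ u ∈ Set.Icc 0 t, ‖a u‖ ≤ M) {i : ℕ}
    (hi : i < ⌊t / Δ⌋₊) : |∫ u in i * Δ..(i + 1) * Δ, a u| ≤ M * Δ := by
  have hend : ((i : ℝ) + 1) * Δ ≤ t := by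
    have := (Nat.le_floor_iff' i.succ_ne_zero).1 hi
    push_cast at this
    exact (le_div_iff₀ hΔ).1 this
  have hlen : ((i : ℝ) + 1) * Δ - i * Δ = Δ := by ring
  have := norm_integral_le_of_norm_le_const (a := i * Δ) (b := (i + 1) * Δ) (f := a)
    fun u hu => by
      rw [Set.uIoc_of_le (by nlinarith)] at hu
      exact hM u ⟨(by positivity : (0 : ℝ) ≤ i * Δ).trans hu.1.le, hu.2.trans hend⟩
  rwa [hlen, abs_of_pos hΔ] at this

variable {ι : Type*} {l : Filter ι} {Δ : ι → ℝ}

theorem tendsto_natFloor_div_mul (ht : 0 ≤ t) (hΔ : ∀ n, 0 < Δ n)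
    (hΔ0 : Tendsto Δ l (𝓝 0)) :
    Tendsto (fun n => (⌊t / Δ n⌋₊ : ℝ) * Δ n) l (𝓝[Set.Icc 0 t] t) := by
  refine tendsto_nhdsWithin_iff.2 ⟨?_, Eventually.of_forall fun n =>
    ⟨by have := hΔ n; positivity, natFloor_div_mul_le ht (hΔ n)⟩⟩
  refine tendsto_of_tendsto_of_tendsto_of_le_of_le (by simpa using hΔ0.const_sub t)
    tendsto_const_nhds (fun n => (sub_lt_natFloor_div_mul (hΔ n)).le)
    fun n => natFloor_div_mul_le ht (hΔ n)

theorem tendsto_sum_integral_mesh (ha : ContinuousOn a (Set.Icc 0 t)) (ht : 0 ≤ t)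
    (hΔ : ∀ n, 0 < Δ n) (hΔ0 : Tendsto Δ l (𝓝 0)) :
    Tendsto (fun n => ∑ i ∈ range ⌊t / Δ n⌋₊, ∫ u in i * Δ n..(i + 1) * Δ n, a u) l
      (𝓝 (∫ u in 0..t, a u)) := by
  have hprim : ContinuousWithinAt (fun x => ∫ u in 0..x, a u) (Set.Icc 0 t) t := by
    have := continuousOn_primitive_interval (μ := volume) (a := 0) (b := t)
      (by rw [Set.uIcc_of_le ht]; exact ha.integrableOn_Icc)
    rw [Set.uIcc_of_le ht] at this
    exact this t ⟨ht, le_rfl⟩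
  refine (hprim.tendsto.comp (tendsto_natFloor_div_mul ht hΔ hΔ0)).congr fun n => ?_
  refine (sum_integral_mesh (hΔ n).le (ContinuousOn.intervalIntegrable ?_)).symm
  rw [Set.uIcc_of_le (by have := hΔ n; positivity)]
  exact ha.mono (Set.Icc_subset_Icc_right (natFloor_div_mul_le ht (hΔ n)))

theorem tendsto_sum_sq_integral_mesh (hM : ∀ u ∈ Set.Icc 0 t, ‖a u‖ ≤ M) (ht : 0 ≤ t)
    (hΔ : ∀ n, 0 < Δ n) (hΔ0 : Tendsto Δ l (𝓝 0)) :
    Tendsto (fun n => ∑ i ∈ range ⌊t / Δ n⌋₊, (∫ u in i * Δ n..(i + 1) * Δ n, a u) ^ 2) l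
      (𝓝 0) := by
  refine squeeze_zero (fun n => sum_nonneg fun i _ => sq_nonneg _) (fun n => ?_)
    (by simpa using hΔ0.const_mul (t * M ^ 2))
  calc ∑ i ∈ range ⌊t / Δ n⌋₊, (∫ u in i * Δ n..(i + 1) * Δ n, a u) ^ 2
      ≤ ∑ _i ∈ range ⌊t / Δ n⌋₊, (M * Δ n) ^ 2 := sum_le_sum fun i hi =>
        sq_le_sq.2 ((abs_integral_mesh_le (hΔ n) hM (mem_range.1 hi)).trans (le_abs_self _))
    _ = (⌊t / Δ n⌋₊ * Δ n) * (M ^ 2 * Δ n) := by rw [sum_const, card_range, nsmul_eq_mul]; ring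
    _ ≤ t * (M ^ 2 * Δ n) := by
        have := hΔ n
        gcongr
        exact natFloor_div_mul_le ht this
    _ = t * M ^ 2 * Δ n := by ring

theorem eventually_abs_integral_mesh_le (hM : ∀ u ∈ Set.Icc 0 t, ‖a u‖ ≤ M)
    (hΔ : ∀ n, 0 < Δ n) (hΔ0 : Tendsto Δ l (𝓝 0)) :
    ∀ᶠ n in l, ∀ i ∈ range ⌊t / Δ n⌋₊, |∫ u in i * Δ n..(i + 1) * Δ n, a u| ≤ 1 / 2 := by
  have hsmall : ∀ᶠ n in l, M * Δ n ≤ 1 / 2 :=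
    (by simpa using hΔ0.const_mul M : Tendsto (fun n => M * Δ n) l (𝓝 0)).eventually_le_const
      (by norm_num)
  filter_upwards [hsmall] with n hn i hi
  exact (abs_integral_mesh_le (hΔ n) hM (mem_range.1 hi)).trans hn

end Mesh

theorem product_tendsto_exp_neg_integral_general (T : ℝ) (a : ℝ → ℝ)
    (ha : ContinuousOn a (Set.Icc 0 T)) (Δt : ℕ → ℝ) (hΔt : ∀ n, 0 < Δt n)
    (hΔt0 : Filter.Tendsto Δt Filter.atTop (nhds 0))
    (t : ℝ) (ht : t ∈ Set.Icc 0 T) :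
    Filter.Tendsto
      (fun n => ∏ i ∈ Finset.range ⌊t / Δt n⌋₊,
        (1 + ∫ u in (i * Δt n)..((i + 1) * Δt n), a u)⁻¹)
      Filter.atTop (nhds (Real.exp (-∫ u in (0:ℝ)..t, a u))) := by
  have hat : ContinuousOn a (Set.Icc 0 t) := ha.mono (Set.Icc_subset_Icc_right ht.2)
  obtain ⟨M, hM⟩ := isCompact_Icc.exists_bound_of_continuousOn hat
  exact tendsto_prod_inv_one_add (eventually_abs_integral_mesh_le hM hΔt hΔt0)
    (tendsto_sum_integral_mesh hat ht.1 hΔt hΔt0) (tendsto_sum_sq_integral_mesh hM ht.1 hΔt hΔt0)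

/-- For `a` continuous on `[0,T]`, mesh sizes `Δt n > 0` tending to `0`,
and `F_i^{(n)} = ∫_{iΔtₙ}^{(i+1)Δtₙ} a(u) du` (indexing the subintervals of `[0,t]`),
for each `t ∈ [0,T]`,
`∏_{i=0}^{⌊t/Δtₙ⌋-1} (1 + F_i^{(n)})⁻¹ → exp(-∫_0^t a(s) ds)` as `n → ∞`. -/
theorem product_tendsto_exp_neg_integral (T : ℝ) (hT : 0 < T) (a : ℝ → ℝ)
    (ha : ContinuousOn a (Set.Icc 0 T)) (Δt : ℕ → ℝ) (hΔt : ∀ n, 0 < Δt n)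
    (hΔt0 : Filter.Tendsto Δt Filter.atTop (nhds 0))
    (t : ℝ) (ht : t ∈ Set.Icc 0 T) :
    Filter.Tendsto
      (fun n => ∏ i ∈ Finset.range ⌊t / Δt n⌋₊,
        (1 + ∫ u in (i * Δt n)..((i + 1) * Δt n), a u)⁻¹)
      Filter.atTop (nhds (Real.exp (-∫ u in (0:ℝ)..t, a u))) :=
  product_tendsto_exp_neg_integral_general T a ha Δt hΔt hΔt0 t ht
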